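/- Let M > 0, R₀ > 0, δ > 0 and k ∈ ℝ. There is a constant C > 0, depending only on M, R₀, δ and k, such that for every integer j ≥ 1 and every x ∈ ℝ³ with x ≠ 0, |x| ≤ R₀ and |x₃| ≤ M(x₁² + x₂²), the gradient of the point-source kernel satisfies |∇_x Φ_k(x, x_j)| ≤ C/|x|². -/

import Mathlib

noncomputable section

open Real

/-- Euclidean space `ℝ³`. -/
abbrev E3 := EuclideanSpace ℝ (Fin 3)

/-- The fundamental solution `Φ_k(x,y) = e^{ik|x−y|}/(4π|x−y|)` of the Helmholtz
equation in `ℝ³`. -/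
def Phi (k : ℝ) (x y : E3) : ℂ :=
  Complex.exp (Complex.I * (k : ℂ) * (‖x - y‖ : ℂ)) / ((4 * Real.pi * ‖x - y‖ : ℝ) : ℂ)

/-- The exterior source points `x_j = (0,0,δ/j)`. -/
def xj (δ : ℝ) (j : ℕ) : E3 := EuclideanSpace.single (2 : Fin 3) (δ / j)

/-! Away from the source, `Φ_k(·, x_j)` is the radial profile `t ↦ e^{ikt}/(4πt)` composed with
the distance to `x_j`, a function with gradient of norm at most `1`; hence
`|∇Φ_k| ≤ (|k| r + 1)/(4π r²)` with `r = |x - x_j| ≤ R₀ + δ`. Since `|x₃| ≤ R₀`, the cusp condition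
gives `x₃² ≤ M R₀ (x₁² + x₂²)`, and `x₁² + x₂² ≤ r²` because `x_j` lies on the `x₃`-axis; so
`|x|² ≤ (1 + M R₀) r²` uniformly in `j`. -/

lemma norm_fderiv_comp_norm_sub_le {E F : Type*} [NormedAddCommGroup E] [InnerProductSpace ℝ E]
    [NormedAddCommGroup F] [NormedSpace ℝ F] {g : ℝ → F} {x y : E} (hxy : x ≠ y)
    (hg : DifferentiableAt ℝ g ‖x - y‖) :
    ‖fderiv ℝ (fun z => g ‖z - y‖) x‖ ≤ ‖deriv g ‖x - y‖‖ := by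
  have hdist : DifferentiableAt ℝ (fun z : E => ‖z - y‖) x :=
    (differentiableAt_id.sub_const y).norm ℝ (sub_ne_zero.mpr hxy)
  have hlip : LipschitzWith 1 (fun z : E => ‖z - y‖) := by
    simpa [Function.comp_def] using
      lipschitzWith_one_norm.comp (IsometryEquiv.subRight y).isometry.lipschitz
  rw [show (fun z => g ‖z - y‖) = g ∘ fun z => ‖z - y‖ from rfl, fderiv_comp x hg hdist,
    norm_deriv_eq_norm_fderiv]
  calc _ ≤ ‖fderiv ℝ g ‖x - y‖‖ * ‖fderiv ℝ (fun z => ‖z - y‖) x‖ :=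
        ContinuousLinearMap.opNorm_comp_le _ _
    _ ≤ ‖fderiv ℝ g ‖x - y‖‖ * 1 := by gcongr; simpa using norm_fderiv_le_of_lipschitz ℝ hlip
    _ = _ := mul_one _

def helmholtzRadial (k t : ℝ) : ℂ :=
  Complex.exp (Complex.I * k * t) / (4 * π * t)

lemma Phi_eq_helmholtzRadial (k : ℝ) (x y : E3) : Phi k x y = helmholtzRadial k ‖x - y‖ := by
  simp [Phi, helmholtzRadial]

lemma hasDerivAt_helmholtzRadial (k : ℝ) {t : ℝ} (ht : t ≠ 0) :
    HasDerivAt (helmholtzRadial k)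
      (Complex.exp (Complex.I * k * t) * (Complex.I * k * t - 1) / (4 * π * t ^ 2)) t := by
  have hcoe : HasDerivAt (fun s : ℝ => (s : ℂ)) 1 t := (hasDerivAt_id t).ofReal_comp
  have hexp := (hcoe.const_mul (Complex.I * k)).cexp
  have hden := hcoe.const_mul (4 * (π : ℂ))
  have ht' : (t : ℂ) ≠ 0 := by exact_mod_cast ht
  have hπ : (π : ℂ) ≠ 0 := Complex.ofReal_ne_zero.mpr Real.pi_ne_zero
  refine (hexp.div hden (by simp [ht', hπ])).congr_deriv ?_
  field_simp

lemma norm_deriv_helmholtzRadial_le (k : ℝ) {t : ℝ} (ht : 0 < t) :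
    ‖deriv (helmholtzRadial k) t‖ ≤ (|k| * t + 1) / (4 * π * t ^ 2) := by
  rw [(hasDerivAt_helmholtzRadial k ht.ne').deriv, norm_div, norm_mul]
  have hexp : ‖Complex.exp (Complex.I * k * t)‖ = 1 := by
    rw [Complex.norm_exp]; simp
  have hnum : ‖Complex.I * k * t - 1‖ ≤ |k| * t + 1 := by
    refine (norm_sub_le _ _).trans ?_
    simp [abs_of_pos ht]
  have hden : ‖(4 * π * t ^ 2 : ℂ)‖ = 4 * π * t ^ 2 := by
    exact_mod_cast Complex.norm_of_nonneg (by positivity : (0 : ℝ) ≤ 4 * π * t ^ 2)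
  rw [hexp, one_mul, hden]
  gcongr

lemma norm_sq_le_mul_norm_sub_sq {x y : E3} {M R : ℝ} (hM : 0 ≤ M) (hy0 : y 0 = 0)
    (hy1 : y 1 = 0) (hx : |x 2| ≤ M * (x 0 ^ 2 + x 1 ^ 2)) (hxR : |x 2| ≤ R) :
    ‖x‖ ^ 2 ≤ (1 + M * R) * ‖x - y‖ ^ 2 := by
  simp only [EuclideanSpace.real_norm_sq_eq, Fin.sum_univ_three, PiLp.sub_apply, hy0, hy1,
    sub_zero]
  have hx2 : x 2 ^ 2 ≤ M * R * (x 0 ^ 2 + x 1 ^ 2) := by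
    rw [← sq_abs]
    nlinarith [abs_nonneg (x 2)]
  have hR : 0 ≤ R := (abs_nonneg _).trans hxR
  nlinarith [mul_nonneg (mul_nonneg hM hR) (sq_nonneg (x 2 - y 2))]

lemma xj_apply_zero (δ : ℝ) (j : ℕ) : xj δ j 0 = 0 := by simp [xj]

lemma xj_apply_one (δ : ℝ) (j : ℕ) : xj δ j 1 = 0 := by simp [xj]

lemma norm_xj_le {δ : ℝ} (hδ : 0 ≤ δ) {j : ℕ} (hj : 1 ≤ j) : ‖xj δ j‖ ≤ δ := by
  rw [xj, EuclideanSpace.single, PiLp.norm_single, Real.norm_of_nonneg (by positivity)]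
  exact div_le_self hδ (by exact_mod_cast hj)

theorem gradient_point_source_bound (M R₀ δ k : ℝ) (hM : 0 < M) (hR₀ : 0 < R₀)
    (hδ : 0 < δ) :
    ∃ C > 0, ∀ j : ℕ, 1 ≤ j → ∀ x : E3, x ≠ 0 → ‖x‖ ≤ R₀ →
      |x 2| ≤ M * ((x 0) ^ 2 + (x 1) ^ 2) →
      ‖fderiv ℝ (fun z => Phi k z (xj δ j)) x‖ ≤ C / ‖x‖ ^ 2 := by
  refine ⟨(1 + M * R₀) * (|k| * (R₀ + δ) + 1) / (4 * π), by positivity, ?_⟩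
  intro j hj x hx0 hxR hx
  have hcusp : ‖x‖ ^ 2 ≤ (1 + M * R₀) * ‖x - xj δ j‖ ^ 2 :=
    norm_sq_le_mul_norm_sub_sq hM.le (xj_apply_zero δ j) (xj_apply_one δ j) hx
      ((PiLp.norm_apply_le x 2).trans hxR)
  have hxy : x ≠ xj δ j := by
    rintro rfl
    simp_all
  set r := ‖x - xj δ j‖
  have hr : 0 < r := norm_pos_iff.2 (sub_ne_zero.2 hxy)
  have hrR : r ≤ R₀ + δ := (norm_sub_le _ _).trans (add_le_add hxR (norm_xj_le hδ.le hj))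
  simp only [Phi_eq_helmholtzRadial]
  calc _ ≤ ‖deriv (helmholtzRadial k) r‖ :=
        norm_fderiv_comp_norm_sub_le hxy (hasDerivAt_helmholtzRadial k hr.ne').differentiableAt
    _ ≤ (|k| * r + 1) / (4 * π * r ^ 2) := norm_deriv_helmholtzRadial_le k hr
    _ ≤ (|k| * (R₀ + δ) + 1) / (4 * π * r ^ 2) := by gcongr
    _ ≤ _ := by
      rw [div_div, div_le_div_iff₀ (by positivity) (by positivity)]
      have := mul_le_mul_of_nonneg_left hcusp
        (by positivity : 0 ≤ (|k| * (R₀ + δ) + 1) * (4 * π))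
      linarith
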